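/- arXiv:0801.3921 — 6 statements merged into one kernel-verified Lean document; each statement's English description precedes it below -/
import Mathlib

section
/- Let G be a group, K a set, and ∂₀ : K → G a map. Let E(∂₀) be the presented group on the generating set G × K subject to the relations (X,m)·(Y,n)·(X,m)⁻¹ = (X·∂₀(m)·X⁻¹·Y, n) for all X, Y ∈ G and m, n ∈ K, and write ⟦X,m⟧ for the class of the generator (X,m). Then: (i) there is a unique group homomorphism ∂ : E(∂₀) → G with ∂⟦X,m⟧ = X·∂₀(m)·X⁻¹ for all X ∈ G, m ∈ K; (ii) there is a unique left action ▷ of G on E(∂₀) by group automorphisms with X ▷ ⟦Y,m⟧ = ⟦X·Y, m⟧ for all X, Y ∈ G, m ∈ K; (iii) with these data, (G, E(∂₀), ∂, ▷) satisfies the crossed module axioms. -/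
/-- The defining relations of the principal group of the free crossed module on a map
`d0 : K → G`: for all `X Y : G` and `m n : K`,
`(X,m) * (Y,n) * (X,m)⁻¹ = (X * d0 m * X⁻¹ * Y, n)`. -/
def crossedRels {G K : Type*} [Group G] (d0 : K → G) : Set (FreeGroup (G × K)) :=
  {r | ∃ (X Y : G) (m n : K),
    r = FreeGroup.of (X, m) * FreeGroup.of (Y, n) * (FreeGroup.of (X, m))⁻¹ *
        (FreeGroup.of (X * d0 m * X⁻¹ * Y, n))⁻¹}

/-- The principal group `E(d0)` of the free crossed module on `d0 : K → G`: the presented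
group on the generating set `G × K` subject to the relations `crossedRels d0`. -/
abbrev FreeCMGroup {G K : Type*} [Group G] (d0 : K → G) : Type _ :=
  PresentedGroup (crossedRels d0)

/-- The class `⟦X, m⟧` of the generator `(X, m)` in `E(d0)`. -/
def cmGen {G K : Type*} [Group G] (d0 : K → G) (X : G) (m : K) : FreeCMGroup d0 :=
  PresentedGroup.of (X, m)

/-!
Both generator formulas respect the defining relations: for `∂` the relation becomes a group
identity in `G`, and the relations are permuted by left translation of the `G`-coordinate.
Since homomorphisms out of a presented group are determined on generators, this gives
uniqueness, and it reduces both crossed module axioms to generators, where (CM1) is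
immediate and the Peiffer identity is the defining relation itself.
-/

namespace FreeCMGroup

variable {G K : Type*} [Group G] {d0 : K → G}

theorem hom_ext {H : Type*} [Group H] {φ ψ : FreeCMGroup d0 →* H}
    (h : ∀ X m, φ (cmGen d0 X m) = ψ (cmGen d0 X m)) : φ = ψ :=
  PresentedGroup.ext fun p => h p.1 p.2

theorem mulEquiv_ext {φ ψ : FreeCMGroup d0 ≃* FreeCMGroup d0}
    (h : ∀ X m, φ (cmGen d0 X m) = ψ (cmGen d0 X m)) : φ = ψ :=
  MulEquiv.toMonoidHom_injective (hom_ext h)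

theorem cmGen_mul_cmGen_mul_inv (X Y : G) (m n : K) :
    cmGen d0 X m * cmGen d0 Y n * (cmGen d0 X m)⁻¹ = cmGen d0 (X * d0 m * X⁻¹ * Y) n := by
  have h := PresentedGroup.one_of_mem (show _ ∈ crossedRels d0 from ⟨X, Y, m, n, rfl⟩)
  simp only [map_mul, map_inv, mul_inv_eq_one] at h
  exact h

variable (d0) in
def lift {H : Type*} [Group H] (f : G → K → H)
    (hf : ∀ X Y m n, f X m * f Y n * (f X m)⁻¹ = f (X * d0 m * X⁻¹ * Y) n) :
    FreeCMGroup d0 →* H :=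
  PresentedGroup.toGroup (f := fun p => f p.1 p.2) <| by
    rintro _ ⟨X, Y, m, n, rfl⟩
    simp only [map_mul, map_inv, FreeGroup.lift_apply_of, hf, mul_inv_cancel]

@[simp]
theorem lift_cmGen {H : Type*} [Group H] (f : G → K → H)
    (hf : ∀ X Y m n, f X m * f Y n * (f X m)⁻¹ = f (X * d0 m * X⁻¹ * Y) n) (X : G) (m : K) :
    lift d0 f hf (cmGen d0 X m) = f X m :=
  PresentedGroup.toGroup.of _

variable (d0) in
def boundary : FreeCMGroup d0 →* G :=
  lift d0 (fun X m => X * d0 m * X⁻¹) fun _ _ _ _ => by group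

@[simp]
theorem boundary_cmGen (X : G) (m : K) : boundary d0 (cmGen d0 X m) = X * d0 m * X⁻¹ :=
  lift_cmGen ..

theorem eq_boundary {δ : FreeCMGroup d0 →* G}
    (hδ : ∀ X m, δ (cmGen d0 X m) = X * d0 m * X⁻¹) : δ = boundary d0 :=
  hom_ext fun X m => by rw [hδ, boundary_cmGen]

variable (d0) in
def translate (X : G) : FreeCMGroup d0 →* FreeCMGroup d0 :=
  lift d0 (fun Y m => cmGen d0 (X * Y) m) fun Y Z m n => by
    rw [cmGen_mul_cmGen_mul_inv]
    congr 1
    group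

@[simp]
theorem translate_cmGen (X Y : G) (m : K) : translate d0 X (cmGen d0 Y m) = cmGen d0 (X * Y) m :=
  lift_cmGen ..

theorem translate_one : translate d0 (1 : G) = MonoidHom.id _ :=
  hom_ext fun X m => by simp

theorem translate_mul (X Y : G) :
    translate d0 (X * Y) = (translate d0 X).comp (translate d0 Y) :=
  hom_ext fun Z m => by simp [mul_assoc]

instance : MulDistribMulAction G (FreeCMGroup d0) where
  smul X := translate d0 X
  one_smul := DFunLike.congr_fun translate_one
  mul_smul X Y := DFunLike.congr_fun (translate_mul X Y)
  smul_mul X := map_mul (translate d0 X)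
  smul_one X := map_one (translate d0 X)

theorem smul_cmGen (X Y : G) (m : K) : X • cmGen d0 Y m = cmGen d0 (X * Y) m :=
  translate_cmGen X Y m

theorem eq_toMulAut {ρ : G →* MulAut (FreeCMGroup d0)}
    (hρ : ∀ X Y m, ρ X (cmGen d0 Y m) = cmGen d0 (X * Y) m) :
    ρ = MulDistribMulAction.toMulAut G (FreeCMGroup d0) :=
  MonoidHom.ext fun X => mulEquiv_ext fun Y m => by
    rw [hρ, MulDistribMulAction.toMulAut_apply, MulDistribMulAction.toMulEquiv_apply, smul_cmGen]

theorem boundary_smul (X : G) (e : FreeCMGroup d0) :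
    boundary d0 (X • e) = X * boundary d0 e * X⁻¹ := by
  have h : (boundary d0).comp (translate d0 X) = (MulAut.conj X).toMonoidHom.comp (boundary d0) :=
    hom_ext fun Y m => by simp [mul_assoc]
  exact DFunLike.congr_fun h e

theorem peiffer_identity (e f : FreeCMGroup d0) : boundary d0 e • f = e * f * e⁻¹ := by
  have h : (MulDistribMulAction.toMulAut G (FreeCMGroup d0)).comp (boundary d0) = MulAut.conj :=
    hom_ext fun X m => mulEquiv_ext fun Y n => by
      simp [smul_cmGen, cmGen_mul_cmGen_mul_inv]
  exact DFunLike.congr_fun (DFunLike.congr_fun h e) f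

end FreeCMGroup

open FreeCMGroup in
/-- Let `G` be a group, `K` a set, `d0 : K → G` a map, and `E(d0)` the
presented group above.  Then: (i) there is a unique group homomorphism `δ : E(d0) →* G` with
`δ ⟦X,m⟧ = X * d0 m * X⁻¹`; (ii) there is a unique left action of `G` on `E(d0)` by group
automorphisms (i.e. a unique homomorphism `ρ : G →* MulAut (E(d0))`) with
`ρ X ⟦Y,m⟧ = ⟦X*Y, m⟧`; (iii) with these data, `(G, E(d0), δ, ρ)` satisfies the crossed
module axioms. -/
theorem freeCrossedModule_exists {G K : Type*} [Group G] (d0 : K → G) :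
    (∃! δ : FreeCMGroup d0 →* G,
        ∀ (X : G) (m : K), δ (cmGen d0 X m) = X * d0 m * X⁻¹) ∧
    (∃! ρ : G →* MulAut (FreeCMGroup d0),
        ∀ (X Y : G) (m : K), ρ X (cmGen d0 Y m) = cmGen d0 (X * Y) m) ∧
    (∀ (δ : FreeCMGroup d0 →* G) (ρ : G →* MulAut (FreeCMGroup d0)),
      (∀ (X : G) (m : K), δ (cmGen d0 X m) = X * d0 m * X⁻¹) →
      (∀ (X Y : G) (m : K), ρ X (cmGen d0 Y m) = cmGen d0 (X * Y) m) →
      (∀ (X : G) (e : FreeCMGroup d0), δ (ρ X e) = X * δ e * X⁻¹) ∧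
      (∀ e f : FreeCMGroup d0, ρ (δ e) f = e * f * e⁻¹)) := by
  refine ⟨⟨boundary d0, boundary_cmGen, fun _ => eq_boundary⟩,
    ⟨MulDistribMulAction.toMulAut G _, smul_cmGen, fun _ => eq_toMulAut⟩, ?_⟩
  rintro δ ρ hδ hρ
  obtain rfl := eq_boundary hδ
  obtain rfl := eq_toMulAut hρ
  exact ⟨boundary_smul, peiffer_identity⟩
end

section
/- Let G be a group, K a set, and ∂₀ : K → G a map, and let E(∂₀) be the principal group of the free crossed module on ∂₀. Then the map ι : K → E(∂₀) defined by ι(m) = ⟦1,m⟧ is injective. -/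
/-!
Every defining relation of `E(∂₀)` says that conjugating `⟦Y,n⟧` by `⟦X,m⟧` gives another
generator with the same label `n`. Hence any map `K → A` into a commutative group extends to
`E(∂₀)` by forgetting the `G`-coordinate of each generator. Applied to the basis of the free
abelian group on `K`, this separates the generators `⟦1,m⟧`.
-/

namespace FreeCMGroup

variable {G K A : Type*} [Group G] [CommGroup A] (d0 : K → G)

def liftComm (f : K → A) : FreeCMGroup d0 →* A :=
  PresentedGroup.toGroup (f := fun p : G × K => f p.2) <| by
    rintro _ ⟨X, Y, m, n, rfl⟩
    simp only [map_mul, map_inv, FreeGroup.lift_apply_of]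
    rw [mul_inv_cancel_comm, mul_inv_cancel]

@[simp]
theorem liftComm_cmGen (f : K → A) (X : G) (m : K) : liftComm d0 f (cmGen d0 X m) = f m :=
  PresentedGroup.toGroup.of _

end FreeCMGroup

/-- Let `G` be a group, `K` a set, `d0 : K → G` a map, and `E(d0)` the
principal group of the free crossed module on `d0`.  Then the map `ι : K → E(d0)`,
`ι m = ⟦1, m⟧`, is injective. -/
theorem freeCrossedModule_gen_injective {G K : Type*} [Group G] (d0 : K → G) :
    Function.Injective (fun m : K => cmGen d0 1 m) := by
  let basis : K → Multiplicative (FreeAbelianGroup K) := fun m => .ofAdd (.of m)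
  have hbasis : Function.Injective basis :=
    Multiplicative.ofAdd.injective.comp FreeAbelianGroup.of_injective
  refine Function.Injective.of_comp (f := FreeCMGroup.liftComm d0 basis) ?_
  simpa only [Function.comp_def, FreeCMGroup.liftComm_cmGen] using hbasis
end

section
/- Let (G, E(∂₀), ∂, ▷) be the free crossed module on a map ∂₀ : K → G. Then the range of ∂ equals the normal closure in G of the set {∂₀(m) : m ∈ K}. -/
theorem Group.range_conj_eq_conjugatesOfSet_range {G K : Type*} [Group G] (d0 : K → G) :
    Set.range (fun p : G × K => p.1 * d0 p.2 * p.1⁻¹) = Group.conjugatesOfSet (Set.range d0) := by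
  ext x
  simp only [Set.mem_range, Group.mem_conjugatesOfSet_iff, isConj_iff, Prod.exists]
  constructor
  · rintro ⟨X, m, rfl⟩
    exact ⟨d0 m, ⟨m, rfl⟩, X, rfl⟩
  · rintro ⟨-, ⟨m, rfl⟩, X, rfl⟩
    exact ⟨X, m, rfl⟩

theorem PresentedGroup.range_eq_closure_range_comp_of {α H : Type*} [Group H]
    {rels : Set (FreeGroup α)} (f : PresentedGroup rels →* H) :
    f.range = Subgroup.closure (Set.range (f ∘ PresentedGroup.of)) := by
  rw [Set.range_comp, ← MonoidHom.map_closure, PresentedGroup.closure_range_of,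
    MonoidHom.range_eq_map]

/-- Let `(G, E(d0), δ, ρ)` be the free crossed module on `d0 : K → G`.
Then the range of the boundary homomorphism `δ` equals the normal closure in `G` of the set
`{d0 m : m ∈ K}`. -/
theorem freeCrossedModule_range_boundary {G K : Type*} [Group G] (d0 : K → G)
    (δ : FreeCMGroup d0 →* G)
    (hδ : ∀ (X : G) (m : K), δ (cmGen d0 X m) = X * d0 m * X⁻¹) :
    δ.range = Subgroup.normalClosure (Set.range d0) := by
  have hgen : δ ∘ PresentedGroup.of = fun p : G × K => p.1 * d0 p.2 * p.1⁻¹ :=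
    funext fun p => hδ p.1 p.2
  rw [PresentedGroup.range_eq_closure_range_comp_of, hgen,
    Group.range_conj_eq_conjugatesOfSet_range, Subgroup.normalClosure]
end

section
/- Let L be a set and G = FreeGroup(L). Let K be a set, ∂₀ : K → G a map, and (G, E(∂₀), ∂, ▷) the free crossed module on ∂₀. Let r₁, …, rₙ ∈ E(∂₀) satisfy ∂(rᵢ) = 1 for each i, let F be the subgroup of E(∂₀) generated by {X ▷ rᵢ : X ∈ G, 1 ≤ i ≤ n}, and let U = E(∂₀)⧸F with induced boundary ∂̄ : U → G and induced G-action ▷̄ (the presented crossed module 𝒰(∂₀; r₁, …, rₙ)). Let (G', E', ∂', ▷') be a crossed module. Then the assignment sending a crossed module morphism (φ, ψ̄) : (G, U, ∂̄, ▷̄) → (G', E', ∂', ▷') to the pair of maps (l ↦ φ(FreeGroup.of l) : L → G', m ↦ ψ̄(⟦1,m⟧F) : K → E') is a bijection onto the set of pairs (φ₀ : L → G', ψ₀ : K → E') such that, with φ : G → G' the group homomorphism extending φ₀ and ψ : E(∂₀) → E' the group homomorphism given by the universal property of the free crossed module (so ψ⟦1,m⟧ = ψ₀(m)), one has ∂'(ψ₀(m))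 = φ(∂₀(m)) for all m ∈ K and ψ(rᵢ) = 1 for all i = 1, …, n. -/
/-! The Peiffer identity makes conjugation in `E(d0)` an instance of the `G`-action, so the
subgroup `F` generated by the `G`-orbits of the `r i` is normal. A morphism out of
`U = E(d0) ⧸ F` is then the same as a morphism out of `E(d0)` killing `F`, and, by equivariance,
killing the `r i`. By the universal properties of the free group and of the free crossed
module, morphisms out of `E(d0)` are determined by, and exist for, any compatible values on the
generators `of l` and `⟦1, m⟧`. -/

section CrossedModule

variable {G E G' E' : Type*} [Group G] [Group E] [Group G'] [Group E']

def IsCrossedModuleHom (δ : E →* G) (ρ : G →* MulAut E) (δ' : E' →* G') (ρ' : G' →* MulAut E')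
    (φ : G →* G') (ψ : E →* E') : Prop :=
  δ'.comp ψ = φ.comp δ ∧ ∀ (X : G) (e : E), ψ (ρ X e) = ρ' (φ X) (ψ e)

theorem closure_orbits_eq_normalClosure {ι : Type*} {δ : E →* G} {ρ : G →* MulAut E}
    (hCM2 : ∀ e f : E, ρ (δ e) f = e * f * e⁻¹) (r : ι → E) :
    Subgroup.closure {x | ∃ (X : G) (i : ι), x = ρ X (r i)} =
      Subgroup.normalClosure {x | ∃ (X : G) (i : ι), x = ρ X (r i)} := by
  set S := {x | ∃ (X : G) (i : ι), x = ρ X (r i)}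
  have hstable : ∀ (X : G), ∀ x ∈ Subgroup.closure S, ρ X x ∈ Subgroup.closure S := by
    intro X x hx
    have hmap : (Subgroup.closure S).map (ρ X).toMonoidHom ≤ Subgroup.closure S := by
      rw [MonoidHom.map_closure, Subgroup.closure_le]
      rintro _ ⟨_, ⟨Y, i, rfl⟩, rfl⟩
      exact Subgroup.subset_closure ⟨X * Y, i, by rw [map_mul]; rfl⟩
    exact hmap ⟨x, hx, rfl⟩
  have : (Subgroup.closure S).Normal := ⟨fun x hx e => hCM2 e x ▸ hstable (δ e) x hx⟩
  exact le_antisymm Subgroup.closure_le_normalClosure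
    (Subgroup.normalClosure_le_normal Subgroup.subset_closure)

theorem normalClosure_orbits_le_ker {ι : Type*} {ρ : G →* MulAut E} {ρ' : G' →* MulAut E'}
    {φ : G →* G'} {ψ : E →* E'} (hψ : ∀ (X : G) (e : E), ψ (ρ X e) = ρ' (φ X) (ψ e))
    {r : ι → E} (hr : ∀ i, ψ (r i) = 1) :
    Subgroup.normalClosure {x | ∃ (X : G) (i : ι), x = ρ X (r i)} ≤ ψ.ker := by
  refine Subgroup.normalClosure_le_normal ?_
  rintro _ ⟨X, i, rfl⟩
  rw [SetLike.mem_coe, MonoidHom.mem_ker, hψ, hr, map_one]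

theorem isCrossedModuleHom_quotient_iff {N : Subgroup E} [N.Normal] {δ : E →* G}
    {ρ : G →* MulAut E} {δb : E ⧸ N →* G} {ρb : G →* MulAut (E ⧸ N)}
    (hδb : ∀ e : E, δb (QuotientGroup.mk e) = δ e)
    (hρb : ∀ (X : G) (e : E), ρb X (QuotientGroup.mk e) = QuotientGroup.mk (ρ X e))
    {δ' : E' →* G'} {ρ' : G' →* MulAut E'} {φ : G →* G'} {ψb : E ⧸ N →* E'} :
    IsCrossedModuleHom δb ρb δ' ρ' φ ψb ↔
      IsCrossedModuleHom δ ρ δ' ρ' φ (ψb.comp (QuotientGroup.mk' N)) := by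
  have hδ : δb.comp (QuotientGroup.mk' N) = δ := MonoidHom.ext hδb
  refine and_congr ?_ (forall_congr' fun X => ?_)
  · rw [← MonoidHom.cancel_right (QuotientGroup.mk'_surjective N), MonoidHom.comp_assoc,
      MonoidHom.comp_assoc, hδ]
  · rw [QuotientGroup.mk_surjective.forall]
    simp only [hρb, MonoidHom.comp_apply, QuotientGroup.mk'_apply]

end CrossedModule

namespace FreeCMGroup

variable {G K G' E' : Type*} [Group G] [Group G'] [Group E'] {d0 : K → G}

theorem cmGen_eq_act_one {ρ : G →* MulAut (FreeCMGroup d0)}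
    (hρ : ∀ (X Y : G) (m : K), ρ X (cmGen d0 Y m) = cmGen d0 (X * Y) m) (X : G) (m : K) :
    cmGen d0 X m = ρ X (cmGen d0 1 m) := by
  rw [hρ, mul_one]

theorem hom_ext_of_equivariant {ρ : G →* MulAut (FreeCMGroup d0)}
    (hρ : ∀ (X Y : G) (m : K), ρ X (cmGen d0 Y m) = cmGen d0 (X * Y) m)
    {ρ' : G' →* MulAut E'} {φ : G →* G'} {ψ₁ ψ₂ : FreeCMGroup d0 →* E'}
    (h₁ : ∀ X e, ψ₁ (ρ X e) = ρ' (φ X) (ψ₁ e)) (h₂ : ∀ X e, ψ₂ (ρ X e) = ρ' (φ X) (ψ₂ e))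
    (h : ∀ m, ψ₁ (cmGen d0 1 m) = ψ₂ (cmGen d0 1 m)) : ψ₁ = ψ₂ :=
  PresentedGroup.ext fun ⟨X, m⟩ => by
    change ψ₁ (cmGen d0 X m) = ψ₂ (cmGen d0 X m)
    rw [cmGen_eq_act_one hρ, h₁, h₂, h]

theorem lift_eq_one_of_mem_crossedRels {δ' : E' →* G'} {ρ' : G' →* MulAut E'}
    (hCM1' : ∀ (x : G') (e : E'), δ' (ρ' x e) = x * δ' e * x⁻¹)
    (hCM2' : ∀ e f : E', ρ' (δ' e) f = e * f * e⁻¹) {φ : G →* G'} {ψ0 : K → E'}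
    (hψ0 : ∀ m, δ' (ψ0 m) = φ (d0 m)) :
    ∀ r ∈ crossedRels d0, FreeGroup.lift (fun p : G × K => ρ' (φ p.1) (ψ0 p.2)) r = 1 := by
  rintro _ ⟨X, Y, m, n, rfl⟩
  rw [map_mul, map_inv, mul_inv_eq_one]
  calc _ = ρ' (φ X) (ψ0 m) * ρ' (φ Y) (ψ0 n) * (ρ' (φ X) (ψ0 m))⁻¹ := by
          simp only [map_mul, map_inv, FreeGroup.lift_apply_of]
    _ = ρ' (δ' (ρ' (φ X) (ψ0 m))) (ρ' (φ Y) (ψ0 n)) := (hCM2' _ _).symm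
    _ = _ := by simp [hCM1', hψ0, MulAut.mul_apply]

theorem exists_isCrossedModuleHom {δ : FreeCMGroup d0 →* G} {ρ : G →* MulAut (FreeCMGroup d0)}
    (hδ : ∀ (X : G) (m : K), δ (cmGen d0 X m) = X * d0 m * X⁻¹)
    (hρ : ∀ (X Y : G) (m : K), ρ X (cmGen d0 Y m) = cmGen d0 (X * Y) m)
    {δ' : E' →* G'} {ρ' : G' →* MulAut E'}
    (hCM1' : ∀ (x : G') (e : E'), δ' (ρ' x e) = x * δ' e * x⁻¹)
    (hCM2' : ∀ e f : E', ρ' (δ' e) f = e * f * e⁻¹) {φ : G →* G'} {ψ0 : K → E'}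
    (hψ0 : ∀ m, δ' (ψ0 m) = φ (d0 m)) :
    ∃ ψ : FreeCMGroup d0 →* E',
      IsCrossedModuleHom δ ρ δ' ρ' φ ψ ∧ ∀ m, ψ (cmGen d0 1 m) = ψ0 m := by
  let ψ := PresentedGroup.toGroup (lift_eq_one_of_mem_crossedRels hCM1' hCM2' hψ0)
  have hψ : ∀ X m, ψ (cmGen d0 X m) = ρ' (φ X) (ψ0 m) := fun _ _ => PresentedGroup.toGroup.of _
  have hequiv : ∀ X, ψ.comp (ρ X).toMonoidHom = (ρ' (φ X)).toMonoidHom.comp ψ := fun X =>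
    PresentedGroup.ext fun ⟨Y, m⟩ => by
      change ψ (ρ X (cmGen d0 Y m)) = ρ' (φ X) (ψ (cmGen d0 Y m))
      simp [hρ, hψ, MulAut.mul_apply]
  refine ⟨ψ, ⟨PresentedGroup.ext fun ⟨X, m⟩ => ?_, fun X => DFunLike.congr_fun (hequiv X)⟩,
    fun m => by simp [hψ]⟩
  change δ' (ψ (cmGen d0 X m)) = φ (δ (cmGen d0 X m))
  simp [hψ, hCM1', hδ, hψ0]

end FreeCMGroup

theorem presentedCrossedModule_morphism_bijection_general {L K G' E' : Type*}
    [Group G'] [Group E'] (d0 : K → FreeGroup L)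
    (δ : FreeCMGroup d0 →* FreeGroup L) (ρ : FreeGroup L →* MulAut (FreeCMGroup d0))
    (hδ : ∀ (X : FreeGroup L) (m : K), δ (cmGen d0 X m) = X * d0 m * X⁻¹)
    (hρ : ∀ (X Y : FreeGroup L) (m : K), ρ X (cmGen d0 Y m) = cmGen d0 (X * Y) m)
    (hCM2 : ∀ e f : FreeCMGroup d0, ρ (δ e) f = e * f * e⁻¹)
    (n : ℕ) (r : Fin n → FreeCMGroup d0)
    (δb : (FreeCMGroup d0 ⧸ Subgroup.normalClosure
        {x | ∃ (X : FreeGroup L) (i : Fin n), x = ρ X (r i)}) →* FreeGroup L)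
    (hδb : ∀ e : FreeCMGroup d0, δb (QuotientGroup.mk e) = δ e)
    (ρb : FreeGroup L →* MulAut (FreeCMGroup d0 ⧸ Subgroup.normalClosure
        {x | ∃ (X : FreeGroup L) (i : Fin n), x = ρ X (r i)}))
    (hρb : ∀ (X : FreeGroup L) (e : FreeCMGroup d0),
      ρb X (QuotientGroup.mk e) = QuotientGroup.mk (ρ X e))
    (δ' : E' →* G') (ρ' : G' →* MulAut E')
    (hCM1' : ∀ (x : G') (e : E'), δ' (ρ' x e) = x * δ' e * x⁻¹)
    (hCM2' : ∀ e f : E', ρ' (δ' e) f = e * f * e⁻¹) :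
    Subgroup.closure {x | ∃ (X : FreeGroup L) (i : Fin n), x = ρ X (r i)} =
      Subgroup.normalClosure {x | ∃ (X : FreeGroup L) (i : Fin n), x = ρ X (r i)} ∧
    Set.BijOn
      (fun p : (FreeGroup L →* G') × ((FreeCMGroup d0 ⧸ Subgroup.normalClosure
            {x | ∃ (X : FreeGroup L) (i : Fin n), x = ρ X (r i)}) →* E') =>
        ((fun l => p.1 (FreeGroup.of l), fun m => p.2 (QuotientGroup.mk (cmGen d0 1 m))) :
          (L → G') × (K → E')))
      {p | δ'.comp p.2 = p.1.comp δb ∧ ∀ X u, p.2 (ρb X u) = ρ' (p.1 X) (p.2 u)}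
      {q | (∀ m : K, δ' (q.2 m) = FreeGroup.lift q.1 (d0 m)) ∧
           ∀ ψ : FreeCMGroup d0 →* E',
             (∀ m : K, ψ (cmGen d0 1 m) = q.2 m) →
             δ'.comp ψ = (FreeGroup.lift q.1).comp δ →
             (∀ (X : FreeGroup L) (e : FreeCMGroup d0),
               ψ (ρ X e) = ρ' (FreeGroup.lift q.1 X) (ψ e)) →
             ∀ i, ψ (r i) = 1} := by
  refine ⟨closure_orbits_eq_normalClosure hCM2 r, ?_, ?_, ?_⟩
  · rintro ⟨φ, ψb⟩ hp
    obtain ⟨hδψ, hψ⟩ := (isCrossedModuleHom_quotient_iff hδb hρb).1 hp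
    have hφ : FreeGroup.lift (fun l => φ (FreeGroup.of l)) = φ := FreeGroup.lift.apply_symm_apply φ
    refine ⟨fun m => ?_, fun ψ hψ0 _ hψ' i => ?_⟩
    · dsimp only
      rw [hφ]
      simpa [hδ] using DFunLike.congr_fun hδψ (cmGen d0 1 m)
    · rw [hφ] at hψ'
      rw [FreeCMGroup.hom_ext_of_equivariant hρ hψ' hψ hψ0, MonoidHom.comp_apply,
        QuotientGroup.mk'_apply, (QuotientGroup.eq_one_iff (r i)).2 ?_, map_one]
      exact Subgroup.subset_normalClosure ⟨1, i, by rw [map_one]; rfl⟩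
  · rintro ⟨φ, ψb⟩ hp ⟨φ', ψb'⟩ hp' h
    obtain rfl : φ = φ' := FreeGroup.ext_hom _ _ (congrFun (congrArg Prod.fst h))
    refine Prod.ext rfl (QuotientGroup.monoidHom_ext _ ?_)
    exact FreeCMGroup.hom_ext_of_equivariant hρ ((isCrossedModuleHom_quotient_iff hδb hρb).1 hp).2
      ((isCrossedModuleHom_quotient_iff hδb hρb).1 hp').2 (congrFun (congrArg Prod.snd h))
  · rintro ⟨φ0, ψ0⟩ ⟨hψ0, hkill⟩
    obtain ⟨ψ, hψ, hψ1⟩ := FreeCMGroup.exists_isCrossedModuleHom hδ hρ hCM1' hCM2' hψ0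
    have hN := normalClosure_orbits_le_ker hψ.2 (hkill ψ hψ1 hψ.1 hψ.2)
    refine ⟨(FreeGroup.lift φ0, QuotientGroup.lift _ ψ hN),
      (isCrossedModuleHom_quotient_iff hδb hρb).2 ?_, ?_⟩
    · rwa [QuotientGroup.lift_comp_mk']
    · simp [hψ1]

/-- Let `L` be a set and `G = FreeGroup L`, let `d0 : K → G`, and let
`(G, E(d0), δ, ρ)` be the free crossed module on `d0`.  Let `r 1, …, r n ∈ E(d0)` be
2-relations (`δ (r i) = 1`), let `F` be the subgroup of `E(d0)` generated by
`{ρ X (r i)}` (which equals the normal closure of that set — the first conjunct below), and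
let `U = E(d0) ⧸ F` with induced boundary `δb` and induced `G`-action `ρb` (the presented
crossed module `𝒰(d0; r 1, …, r n)`).  Let `(G', E', δ', ρ')` be a crossed module.  Then the
assignment sending a crossed module morphism `(φ, ψb) : (G, U) → (G', E')` to the pair of
maps `(l ↦ φ (of l), m ↦ ψb ⟦⟦1,m⟧⟧)` is a bijection onto the set of pairs
`(φ0 : L → G', ψ0 : K → E')` such that, with `φ = FreeGroup.lift φ0` and `ψ : E(d0) →* E'`
the homomorphism given by the universal property of the free crossed module
(`ψ ⟦1,m⟧ = ψ0 m`, `δ' ∘ ψ = φ ∘ δ`, `ψ (ρ X e) = ρ' (φ X) (ψ e)`), one has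
`δ' (ψ0 m) = φ (d0 m)` for all `m` and `ψ (r i) = 1` for all `i`. -/
theorem presentedCrossedModule_morphism_bijection {L K G' E' : Type*}
    [Group G'] [Group E'] (d0 : K → FreeGroup L)
    (δ : FreeCMGroup d0 →* FreeGroup L) (ρ : FreeGroup L →* MulAut (FreeCMGroup d0))
    (hδ : ∀ (X : FreeGroup L) (m : K), δ (cmGen d0 X m) = X * d0 m * X⁻¹)
    (hρ : ∀ (X Y : FreeGroup L) (m : K), ρ X (cmGen d0 Y m) = cmGen d0 (X * Y) m)
    (hCM1 : ∀ (X : FreeGroup L) (e : FreeCMGroup d0), δ (ρ X e) = X * δ e * X⁻¹)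
    (hCM2 : ∀ e f : FreeCMGroup d0, ρ (δ e) f = e * f * e⁻¹)
    (n : ℕ) (r : Fin n → FreeCMGroup d0) (hr : ∀ i, δ (r i) = 1)
    (δb : (FreeCMGroup d0 ⧸ Subgroup.normalClosure
        {x | ∃ (X : FreeGroup L) (i : Fin n), x = ρ X (r i)}) →* FreeGroup L)
    (hδb : ∀ e : FreeCMGroup d0, δb (QuotientGroup.mk e) = δ e)
    (ρb : FreeGroup L →* MulAut (FreeCMGroup d0 ⧸ Subgroup.normalClosure
        {x | ∃ (X : FreeGroup L) (i : Fin n), x = ρ X (r i)}))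
    (hρb : ∀ (X : FreeGroup L) (e : FreeCMGroup d0),
      ρb X (QuotientGroup.mk e) = QuotientGroup.mk (ρ X e))
    (δ' : E' →* G') (ρ' : G' →* MulAut E')
    (hCM1' : ∀ (x : G') (e : E'), δ' (ρ' x e) = x * δ' e * x⁻¹)
    (hCM2' : ∀ e f : E', ρ' (δ' e) f = e * f * e⁻¹) :
    Subgroup.closure {x | ∃ (X : FreeGroup L) (i : Fin n), x = ρ X (r i)} =
      Subgroup.normalClosure {x | ∃ (X : FreeGroup L) (i : Fin n), x = ρ X (r i)} ∧
    Set.BijOn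
      (fun p : (FreeGroup L →* G') × ((FreeCMGroup d0 ⧸ Subgroup.normalClosure
            {x | ∃ (X : FreeGroup L) (i : Fin n), x = ρ X (r i)}) →* E') =>
        ((fun l => p.1 (FreeGroup.of l), fun m => p.2 (QuotientGroup.mk (cmGen d0 1 m))) :
          (L → G') × (K → E')))
      {p | δ'.comp p.2 = p.1.comp δb ∧ ∀ X u, p.2 (ρb X u) = ρ' (p.1 X) (p.2 u)}
      {q | (∀ m : K, δ' (q.2 m) = FreeGroup.lift q.1 (d0 m)) ∧
           ∀ ψ : FreeCMGroup d0 →* E',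
             (∀ m : K, ψ (cmGen d0 1 m) = q.2 m) →
             δ'.comp ψ = (FreeGroup.lift q.1).comp δ →
             (∀ (X : FreeGroup L) (e : FreeCMGroup d0),
               ψ (ρ X e) = ρ' (FreeGroup.lift q.1 X) (ψ e)) →
             ∀ i, ψ (r i) = 1} :=
  presentedCrossedModule_morphism_bijection_general d0 δ ρ hδ hρ hCM2 n r δb hδb ρb hρb δ' ρ' hCM1'
    hCM2'
end

section
/- Let G be a group, K₁ and K₂ sets, K = K₁ ⊕ K₂ their disjoint union, and ∂₀ : K → G a map with ∂₀(m) = 1 for every m ∈ K₂. Let (G, E, ∂, ▷) be the free crossed module on ∂₀, and for i = 1, 2 let F_i be the subgroup of E generated by the set {X ▷ ⟦1,m⟧ : X ∈ G, m ∈ K_i}. Then F₂ is contained in the center of E, both F₁ and F₂ are invariant under the action of G, F₁ ∩ F₂ = {1}, and F₁·F₂ = E; that is, E is the internal direct product of F₁ and F₂, compatibly with the G-action. -/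
/-!
Since `∂₀` is trivial on `K₂`, the relations say that each `⟦X, m⟧` with `m ∈ K₂` commutes with
every generator, so `F₂` is central, hence normal, and `E = F₁ ⊔ F₂ = F₁ F₂`.  For
`F₁ ∩ F₂ = 1`, send `⟦X, m⟧` to `1` for `m ∈ K₁` and to itself for `m ∈ K₂`.  All these images
are central, so each relation reduces to `⟦X ∂₀(m) X⁻¹ Y, n⟧ = ⟦Y, n⟧` for `n ∈ K₂`, which holds
in `E` because `⟦X, m⟧` conjugates the central `⟦Y, n⟧` trivially.  This gives a retraction of
`E` onto `F₂` that kills `F₁`.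
-/

section Generators

variable {G K : Type*} [Group G] (d0 : K → G)

theorem cmGen_conj (X Y : G) (m n : K) :
    cmGen d0 X m * cmGen d0 Y n * (cmGen d0 X m)⁻¹ = cmGen d0 (X * d0 m * X⁻¹ * Y) n :=
  PresentedGroup.mk_eq_mk_of_mul_inv_mem ⟨X, Y, m, n, rfl⟩

theorem cmGen_mem_center {m : K} (hm : d0 m = 1) (X : G) :
    cmGen d0 X m ∈ Subgroup.center (FreeCMGroup d0) := by
  have hcomm : ⊤ ≤ Subgroup.centralizer {cmGen d0 X m} := by
    rw [← PresentedGroup.closure_range_of, Subgroup.closure_le]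
    rintro _ ⟨⟨Y, n⟩, rfl⟩
    have hconj := cmGen_conj d0 X Y m n
    rw [hm, mul_one, mul_inv_cancel, one_mul] at hconj
    exact Subgroup.mem_centralizer_singleton_iff.mpr (mul_inv_eq_iff_eq_mul.mp hconj).symm
  exact Subgroup.mem_center_iff.mpr fun g =>
    Subgroup.mem_centralizer_singleton_iff.mp (hcomm (Subgroup.mem_top g))

theorem cmGen_conj_mul_of_eq_one {n : K} (hn : d0 n = 1) (X Y : G) (m : K) :
    cmGen d0 (X * d0 m * X⁻¹ * Y) n = cmGen d0 Y n := by
  rw [← cmGen_conj, (Subgroup.mem_center_iff.mp (cmGen_mem_center d0 hn Y) _),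
    mul_inv_cancel_right]

def cmSpan {ι : Type*} (i : ι → K) : Subgroup (FreeCMGroup d0) :=
  Subgroup.closure (Set.range fun p : G × ι => cmGen d0 p.1 (i p.2))

variable {d0} {ι : Type*} {i : ι → K} {ρ : G →* MulAut (FreeCMGroup d0)}

theorem closure_act_cmGen_one_eq_cmSpan
    (hρ : ∀ (X Y : G) (m : K), ρ X (cmGen d0 Y m) = cmGen d0 (X * Y) m) :
    Subgroup.closure {x | ∃ (X : G) (k : ι), x = ρ X (cmGen d0 1 (i k))} = cmSpan d0 i := by
  congr 1
  ext x
  simp only [hρ, mul_one, Set.mem_range, Prod.exists, eq_comm]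
  rfl

theorem act_mem_cmSpan
    (hρ : ∀ (X Y : G) (m : K), ρ X (cmGen d0 Y m) = cmGen d0 (X * Y) m)
    (X : G) {f : FreeCMGroup d0} (hf : f ∈ cmSpan d0 i) : ρ X f ∈ cmSpan d0 i := by
  have hmap : (cmSpan d0 i).map (ρ X).toMonoidHom ≤ cmSpan d0 i := by
    rw [cmSpan, MonoidHom.map_closure]
    refine Subgroup.closure_mono ?_
    rintro _ ⟨_, ⟨⟨Y, k⟩, rfl⟩, rfl⟩
    exact ⟨(X * Y, k), (hρ X Y (i k)).symm⟩
  exact hmap (Subgroup.mem_map_of_mem _ hf)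

end Generators

theorem Subgroup.normal_of_le_center {E : Type*} [Group E] {H : Subgroup E}
    (hH : H ≤ Subgroup.center E) : H.Normal :=
  ⟨fun n hn g => by rw [Subgroup.mem_center_iff.mp (hH hn) g, mul_inv_cancel_right]; exact hn⟩

section Sum

variable {G K1 K2 : Type*} [Group G] {d0 : K1 ⊕ K2 → G}

theorem cmSpan_inl_sup_cmSpan_inr : cmSpan d0 Sum.inl ⊔ cmSpan d0 Sum.inr = ⊤ := by
  rw [eq_top_iff, ← PresentedGroup.closure_range_of, Subgroup.closure_le]
  rintro _ ⟨⟨X, k | k⟩, rfl⟩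
  · exact Subgroup.mem_sup_left (Subgroup.subset_closure ⟨(X, k), rfl⟩)
  · exact Subgroup.mem_sup_right (Subgroup.subset_closure ⟨(X, k), rfl⟩)

theorem cmSpan_inr_le_center (h2 : ∀ m : K2, d0 (Sum.inr m) = 1) :
    cmSpan d0 Sum.inr ≤ Subgroup.center (FreeCMGroup d0) := by
  rw [cmSpan, Subgroup.closure_le]
  rintro _ ⟨⟨X, k⟩, rfl⟩
  exact cmGen_mem_center d0 (h2 k) X

variable (d0) in
def cmProjInrGen (p : G × (K1 ⊕ K2)) : FreeCMGroup d0 :=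
  Sum.elim (fun _ => 1) (fun k => cmGen d0 p.1 (Sum.inr k)) p.2

theorem cmProjInrGen_mem_center (h2 : ∀ m : K2, d0 (Sum.inr m) = 1) (p : G × (K1 ⊕ K2)) :
    cmProjInrGen d0 p ∈ Subgroup.center (FreeCMGroup d0) := by
  rcases p with ⟨X, k | k⟩
  · exact Subgroup.one_mem _
  · exact cmGen_mem_center d0 (h2 k) X

theorem cmProjInrGen_rels (h2 : ∀ m : K2, d0 (Sum.inr m) = 1) :
    ∀ r ∈ crossedRels d0, FreeGroup.lift (cmProjInrGen d0) r = 1 := by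
  rintro _ ⟨X, Y, m, n, rfl⟩
  have hcentral := Subgroup.mem_center_iff.mp (cmProjInrGen_mem_center h2 (X, m))
  have hsame : cmProjInrGen d0 (X * d0 m * X⁻¹ * Y, n) = cmProjInrGen d0 (Y, n) := by
    rcases n with k | k
    · rfl
    · exact cmGen_conj_mul_of_eq_one d0 (h2 k) X Y m
  simp only [map_mul, map_inv, FreeGroup.lift_apply_of, hsame]
  rw [← hcentral, mul_inv_cancel_right, mul_inv_cancel]

def cmProjInr (h2 : ∀ m : K2, d0 (Sum.inr m) = 1) : FreeCMGroup d0 →* FreeCMGroup d0 :=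
  PresentedGroup.toGroup (cmProjInrGen_rels h2)

theorem cmSpan_inl_le_ker_cmProjInr (h2 : ∀ m : K2, d0 (Sum.inr m) = 1) :
    cmSpan d0 Sum.inl ≤ (cmProjInr h2).ker := by
  rw [cmSpan, Subgroup.closure_le]
  rintro _ ⟨⟨X, k⟩, rfl⟩
  exact PresentedGroup.toGroup.of _

theorem cmProjInr_eq_self_of_mem (h2 : ∀ m : K2, d0 (Sum.inr m) = 1)
    {e : FreeCMGroup d0} (he : e ∈ cmSpan d0 Sum.inr) :
    cmProjInr h2 e = e := by
  suffices cmSpan d0 Sum.inr ≤ (cmProjInr h2).eqLocus (MonoidHom.id _) from this he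
  rw [cmSpan, Subgroup.closure_le]
  rintro _ ⟨⟨X, k⟩, rfl⟩
  exact PresentedGroup.toGroup.of _

theorem cmSpan_inl_inf_cmSpan_inr (h2 : ∀ m : K2, d0 (Sum.inr m) = 1) :
    cmSpan d0 Sum.inl ⊓ cmSpan d0 Sum.inr = ⊥ := by
  refine eq_bot_iff.mpr fun e ⟨he1, he2⟩ => Subgroup.mem_bot.mpr ?_
  rw [← cmProjInr_eq_self_of_mem h2 he2]
  exact cmSpan_inl_le_ker_cmProjInr h2 he1

end Sum

theorem freeCrossedModule_internal_product_general {G K1 K2 : Type*} [Group G]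
    (d0 : K1 ⊕ K2 → G) (h2 : ∀ m : K2, d0 (Sum.inr m) = 1)
    (ρ : G →* MulAut (FreeCMGroup d0))
    (hρ : ∀ (X Y : G) (m : K1 ⊕ K2), ρ X (cmGen d0 Y m) = cmGen d0 (X * Y) m)
    (F1 F2 : Subgroup (FreeCMGroup d0))
    (hF1 : F1 = Subgroup.closure {x | ∃ (X : G) (m : K1), x = ρ X (cmGen d0 1 (Sum.inl m))})
    (hF2 : F2 = Subgroup.closure {x | ∃ (X : G) (m : K2), x = ρ X (cmGen d0 1 (Sum.inr m))}) :
    F2 ≤ Subgroup.center (FreeCMGroup d0) ∧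
    (∀ (X : G), ∀ f ∈ F1, ρ X f ∈ F1) ∧
    (∀ (X : G), ∀ f ∈ F2, ρ X f ∈ F2) ∧
    F1 ⊓ F2 = ⊥ ∧
    (∀ e : FreeCMGroup d0, ∃ f1 ∈ F1, ∃ f2 ∈ F2, e = f1 * f2) := by
  rw [closure_act_cmGen_one_eq_cmSpan hρ] at hF1 hF2
  subst hF1 hF2
  have hcenter := cmSpan_inr_le_center h2
  have := Subgroup.normal_of_le_center hcenter
  refine ⟨hcenter, fun X _ => act_mem_cmSpan hρ X, fun X _ => act_mem_cmSpan hρ X,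
    cmSpan_inl_inf_cmSpan_inr h2, fun e => ?_⟩
  have he : e ∈ cmSpan d0 Sum.inl ⊔ cmSpan d0 Sum.inr := by
    rw [cmSpan_inl_sup_cmSpan_inr]
    exact Subgroup.mem_top e
  obtain ⟨f1, hf1, f2, hf2, rfl⟩ := Subgroup.mem_sup_of_normal_right.mp he
  exact ⟨f1, hf1, f2, hf2, rfl⟩

/-- Let `G` be a group, `K = K₁ ⊕ K₂` a disjoint union, and `d0 : K → G` a
map with `d0 m = 1` for every `m ∈ K₂`.  Let `(G, E, δ, ρ)` be the free crossed module on
`d0`, and for `i = 1, 2` let `Fᵢ` be the subgroup of `E` generated by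
`{ρ X ⟦1,m⟧ : X ∈ G, m ∈ Kᵢ}`.  Then `F₂` is contained in the center of `E`, both `F₁` and
`F₂` are invariant under the `G`-action, `F₁ ∩ F₂ = {1}` and `F₁·F₂ = E`; that is, `E` is
the internal direct product of `F₁` and `F₂`, compatibly with the `G`-action. -/
theorem freeCrossedModule_internal_product {G K1 K2 : Type*} [Group G]
    (d0 : K1 ⊕ K2 → G) (h2 : ∀ m : K2, d0 (Sum.inr m) = 1)
    (δ : FreeCMGroup d0 →* G) (ρ : G →* MulAut (FreeCMGroup d0))
    (hδ : ∀ (X : G) (m : K1 ⊕ K2), δ (cmGen d0 X m) = X * d0 m * X⁻¹)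
    (hρ : ∀ (X Y : G) (m : K1 ⊕ K2), ρ X (cmGen d0 Y m) = cmGen d0 (X * Y) m)
    (hCM1 : ∀ (X : G) (e : FreeCMGroup d0), δ (ρ X e) = X * δ e * X⁻¹)
    (hCM2 : ∀ e f : FreeCMGroup d0, ρ (δ e) f = e * f * e⁻¹)
    (F1 F2 : Subgroup (FreeCMGroup d0))
    (hF1 : F1 = Subgroup.closure {x | ∃ (X : G) (m : K1), x = ρ X (cmGen d0 1 (Sum.inl m))})
    (hF2 : F2 = Subgroup.closure {x | ∃ (X : G) (m : K2), x = ρ X (cmGen d0 1 (Sum.inr m))}) :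
    F2 ≤ Subgroup.center (FreeCMGroup d0) ∧
    (∀ (X : G), ∀ f ∈ F1, ρ X f ∈ F1) ∧
    (∀ (X : G), ∀ f ∈ F2, ρ X f ∈ F2) ∧
    F1 ⊓ F2 = ⊥ ∧
    (∀ e : FreeCMGroup d0, ∃ f1 ∈ F1, ∃ f2 ∈ F2, e = f1 * f2) :=
  freeCrossedModule_internal_product_general d0 h2 ρ hρ F1 F2 hF1 hF2
end

section
/- Let G be a group, K₁ and K₂ sets, K = K₁ ⊕ K₂ their disjoint union, and ∂₀ : K → G a map with ∂₀(m) = 1 for every m ∈ K₂. Let (G, E, ∂, ▷) be the free crossed module on ∂₀ and let F₂ be the subgroup of E generated by {X ▷ ⟦1,m⟧ : X ∈ G, m ∈ K₂}. Then F₂ is isomorphic, as a group, to the free abelian group on the set (G ⧸ range ∂) × K₂, via an isomorphism sending X ▷ ⟦1,m⟧ (for X ∈ G, m ∈ K₂) to the basis element ([X], m), where [X] denotes the coset of X in G ⧸ range ∂; moreover this isomorphism intertwines the G-action ▷ on F₂ with the G-action on the free abelian group determined on basis elements by X·([Y], m) = ([X·Y], m). -/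
/-!
By the Peiffer identity every element of trivial boundary is central. The generators
`⟦X, m⟧ = ρ X ⟦1, m⟧` with `m ∈ K₂` have trivial boundary, so `F₂` is abelian, and `ρ X ⟦1, m⟧`
depends only on the coset of `X` modulo `range δ`; this gives a map from the free abelian group
on `(G ⧸ range δ) × K₂` onto `F₂`. Conversely `⟦X, m⟧ ↦ ([X], m)` (and `⟦X, k⟧ ↦ 0` for
`k ∈ K₁`) respects the crossed-module relations because `X * d0 m * X⁻¹ ∈ range δ`, and it
inverts the first map on generators. It is `G`-equivariant because it is so on generators.
-/

open scoped IsMulCommutative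

namespace Subgroup

variable {E ι : Type*} [Group E]

noncomputable def closureRangeMulEquivFreeAbelianGroup (c : ι → E)
    (hc : ∀ i j, Commute (c i) (c j)) (φ : E →* Multiplicative (FreeAbelianGroup ι))
    (hφ : ∀ i, φ (c i) = Multiplicative.ofAdd (FreeAbelianGroup.of i)) :
    closure (Set.range c) ≃* Multiplicative (FreeAbelianGroup ι) :=
  have : IsMulCommutative (closure (Set.range c)) :=
    isMulCommutative_closure <| by
      rintro _ ⟨i, rfl⟩ _ ⟨j, rfl⟩
      exact hc i j
  (φ.comp (closure (Set.range c)).subtype).toMulEquiv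
    (AddMonoidHom.toMultiplicativeLeft
      (FreeAbelianGroup.lift fun i => Additive.ofMul ⟨c i, subset_closure ⟨i, rfl⟩⟩))
    (MonoidHom.eq_of_eqOn_dense closure_closure_coe_preimage <| by
      rintro ⟨_, -⟩ ⟨i, rfl⟩
      ext
      simp [hφ])
    (by ext i; simp [hφ])

end Subgroup

section Peiffer

variable {G E : Type*} [Group G] [Group E] {δ : E →* G} {ρ : G →* MulAut E}

theorem mem_center_of_peiffer (hCM2 : ∀ e f : E, ρ (δ e) f = e * f * e⁻¹) {e : E}
    (he : δ e = 1) : e ∈ Subgroup.center E :=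
  Subgroup.mem_center_iff.mpr fun f => by
    simpa [he, eq_mul_inv_iff_mul_eq] using hCM2 e f

theorem peiffer_apply_of_mem_center (hCM2 : ∀ e f : E, ρ (δ e) f = e * f * e⁻¹) {c : E}
    (hc : c ∈ Subgroup.center E) (e : E) : ρ (δ e) c = c := by
  rw [hCM2, Subgroup.mem_center_iff.mp hc, mul_inv_cancel_right]

theorem peiffer_orbit_eq_of_mk_eq (hCM2 : ∀ e f : E, ρ (δ e) f = e * f * e⁻¹) {c : E}
    (hc : c ∈ Subgroup.center E) {X Y : G} (hXY : (X : G ⧸ δ.range) = Y) : ρ X c = ρ Y c := by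
  obtain ⟨e, he⟩ := QuotientGroup.eq.mp hXY
  rw [← mul_inv_cancel_left X Y, ← he, map_mul, MulAut.mul_apply,
    peiffer_apply_of_mem_center hCM2 hc]

def peifferCosetOrbit (hCM2 : ∀ e f : E, ρ (δ e) f = e * f * e⁻¹) (c : E)
    (hc : c ∈ Subgroup.center E) : G ⧸ δ.range → E :=
  Quotient.lift (fun X => ρ X c) fun _ _ hXY =>
    peiffer_orbit_eq_of_mk_eq hCM2 hc (Quotient.sound hXY)

theorem peifferCosetOrbit_mem_center (hCM2 : ∀ e f : E, ρ (δ e) f = e * f * e⁻¹) (c : E)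
    (hc : c ∈ Subgroup.center E) (q : G ⧸ δ.range) :
    peifferCosetOrbit hCM2 c hc q ∈ Subgroup.center E := by
  induction q using QuotientGroup.induction_on with
  | H X => exact MulEquivClass.apply_mem_center (ρ X) hc

theorem range_peifferCosetOrbit {ι : Type*} (hCM2 : ∀ e f : E, ρ (δ e) f = e * f * e⁻¹)
    (c : ι → E) (hc : ∀ i, c i ∈ Subgroup.center E) :
    Set.range (fun p : (G ⧸ δ.range) × ι => peifferCosetOrbit hCM2 (c p.2) (hc p.2) p.1) =
      {x | ∃ (X : G) (i : ι), x = ρ X (c i)} := by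
  ext x
  constructor
  · rintro ⟨⟨⟨X⟩, i⟩, rfl⟩
    exact ⟨X, i, rfl⟩
  · rintro ⟨X, i, rfl⟩
    exact ⟨(X, i), rfl⟩

end Peiffer

namespace FreeCMGroup

variable {G K1 K2 : Type*} [Group G] (d0 : K1 ⊕ K2 → G) (N : Subgroup G) [N.Normal]
  (hN : ∀ m, d0 m ∈ N)

def toFreeAbelianGroup :
    FreeCMGroup d0 →* Multiplicative (FreeAbelianGroup ((G ⧸ N) × K2)) :=
  PresentedGroup.toGroup
    (f := fun p => Sum.elim (fun _ => 1)
      (fun m => Multiplicative.ofAdd (FreeAbelianGroup.of ((p.1 : G ⧸ N), m))) p.2) <| by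
    rintro _ ⟨X, Y, m, n, rfl⟩
    have hconj : ((X * d0 m * X⁻¹ * Y : G) : G ⧸ N) = Y := by
      simp [QuotientGroup.mk_mul, (QuotientGroup.eq_one_iff _).mpr (hN m)]
    cases n <;> simp [hconj, mul_inv_cancel_comm]

variable {d0 N}

@[simp]
theorem toFreeAbelianGroup_cmGen_inl (X : G) (k : K1) :
    toFreeAbelianGroup d0 N hN (cmGen d0 X (Sum.inl k)) = 1 :=
  PresentedGroup.toGroup.of _

@[simp]
theorem toFreeAbelianGroup_cmGen_inr (X : G) (m : K2) :
    toFreeAbelianGroup d0 N hN (cmGen d0 X (Sum.inr m)) =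
      Multiplicative.ofAdd (FreeAbelianGroup.of ((X : G ⧸ N), m)) :=
  PresentedGroup.toGroup.of _

theorem toFreeAbelianGroup_translate (X : G) (α : FreeCMGroup d0 →* FreeCMGroup d0)
    (hα : ∀ (Y : G) (m : K1 ⊕ K2), α (cmGen d0 Y m) = cmGen d0 (X * Y) m) (e : FreeCMGroup d0) :
    toFreeAbelianGroup d0 N hN (α e) = Multiplicative.ofAdd
      (FreeAbelianGroup.map (fun p : (G ⧸ N) × K2 => ((X : G ⧸ N) * p.1, p.2))
        (Multiplicative.toAdd (toFreeAbelianGroup d0 N hN e))) := by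
  have hcomp : (toFreeAbelianGroup d0 N hN).comp α = (AddMonoidHom.toMultiplicative
      (FreeAbelianGroup.map fun p : (G ⧸ N) × K2 => ((X : G ⧸ N) * p.1, p.2))).comp
      (toFreeAbelianGroup d0 N hN) := by
    refine PresentedGroup.ext fun ⟨Y, m⟩ => ?_
    show MonoidHom.comp _ _ (cmGen d0 Y m) = MonoidHom.comp _ _ (cmGen d0 Y m)
    cases m <;> simp [hα]
  exact DFunLike.congr_fun hcomp e

end FreeCMGroup

theorem freeCrossedModule_F2_free_abelian_general {G K1 K2 : Type*} [Group G]
    (d0 : K1 ⊕ K2 → G) (h2 : ∀ m : K2, d0 (Sum.inr m) = 1)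
    (δ : FreeCMGroup d0 →* G) (ρ : G →* MulAut (FreeCMGroup d0))
    (hδ : ∀ (X : G) (m : K1 ⊕ K2), δ (cmGen d0 X m) = X * d0 m * X⁻¹)
    (hρ : ∀ (X Y : G) (m : K1 ⊕ K2), ρ X (cmGen d0 Y m) = cmGen d0 (X * Y) m)
    (hCM2 : ∀ e f : FreeCMGroup d0, ρ (δ e) f = e * f * e⁻¹)
    [hN : δ.range.Normal]
    (F2 : Subgroup (FreeCMGroup d0))
    (hF2 : F2 = Subgroup.closure
      {x | ∃ (X : G) (m : K2), x = ρ X (cmGen d0 1 (Sum.inr m))}) :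
    (∀ (X : G) (m : K2), ρ X (cmGen d0 1 (Sum.inr m)) ∈ F2) ∧
    (∀ (X : G), ∀ f ∈ F2, ρ X f ∈ F2) ∧
    ∃ θ : F2 ≃* Multiplicative (FreeAbelianGroup ((G ⧸ δ.range) × K2)),
      (∀ (X : G) (m : K2) (h : ρ X (cmGen d0 1 (Sum.inr m)) ∈ F2),
        θ ⟨ρ X (cmGen d0 1 (Sum.inr m)), h⟩ =
          Multiplicative.ofAdd
            (FreeAbelianGroup.of ((QuotientGroup.mk X : G ⧸ δ.range), m))) ∧
      (∀ (X : G) (f : FreeCMGroup d0) (hf : f ∈ F2) (hxf : ρ X f ∈ F2),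
        θ ⟨ρ X f, hxf⟩ = Multiplicative.ofAdd
          (FreeAbelianGroup.map
            (fun p : (G ⧸ δ.range) × K2 =>
              ((QuotientGroup.mk X : G ⧸ δ.range) * p.1, p.2))
            (Multiplicative.toAdd (θ ⟨f, hf⟩)))) := by
  subst hF2
  set S := {x | ∃ (X : G) (m : K2), x = ρ X (cmGen d0 1 (Sum.inr m))}
  have hcentral (X : G) (m : K2) : cmGen d0 X (Sum.inr m) ∈ Subgroup.center (FreeCMGroup d0) :=
    mem_center_of_peiffer hCM2 (by simp [hδ, h2])
  let c (p : (G ⧸ δ.range) × K2) : FreeCMGroup d0 :=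
    peifferCosetOrbit hCM2 _ (hcentral 1 p.2) p.1
  have hc_mk (X : G) (m : K2) : c (X, m) = cmGen d0 X (Sum.inr m) :=
    (hρ X 1 _).trans (by rw [mul_one])
  have hc_range : Set.range c = S := range_peifferCosetOrbit hCM2 _ (hcentral 1)
  have hc_comm (p p') : Commute (c p) (c p') :=
    Subgroup.mem_center_iff.mp (peifferCosetOrbit_mem_center hCM2 _ _ p'.1) (c p)
  have hd0 (m : K1 ⊕ K2) : d0 m ∈ δ.range := ⟨cmGen d0 1 m, by simp [hδ]⟩
  let φ := FreeCMGroup.toFreeAbelianGroup d0 δ.range hd0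
  have hφc (p) : φ (c p) = Multiplicative.ofAdd (FreeAbelianGroup.of p) := by
    obtain ⟨q, m⟩ := p
    induction q using QuotientGroup.induction_on with | H X => ?_
    rw [hc_mk]
    exact FreeCMGroup.toFreeAbelianGroup_cmGen_inr hd0 X m
  let θ := (MulEquiv.subgroupCongr (congrArg Subgroup.closure hc_range.symm)).trans
    (Subgroup.closureRangeMulEquivFreeAbelianGroup c hc_comm φ hφc)
  refine ⟨fun X m => Subgroup.subset_closure ⟨X, m, rfl⟩, fun X f hf => ?_, θ, ?_, ?_⟩
  · refine (Subgroup.closure_le (K := (Subgroup.closure S).comap (ρ X).toMonoidHom)).2 ?_ hf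
    rintro _ ⟨Y, m, rfl⟩
    exact Subgroup.subset_closure ⟨X * Y, m, by simp⟩
  · exact fun X m _ => hφc (X, m)
  · intro X f _ _
    exact FreeCMGroup.toFreeAbelianGroup_translate hd0 X (ρ X).toMonoidHom (hρ X) f

/-- Let `G` be a group, `K = K₁ ⊕ K₂`, and `d0 : K → G` a map with
`d0 m = 1` for every `m ∈ K₂`.  Let `(G, E, δ, ρ)` be the free crossed module on `d0`
(whose boundary has normal range, so that the quotient group `G ⧸ range δ` is defined) and
let `F₂ ≤ E` be the subgroup generated by `{ρ X ⟦1,m⟧ : X ∈ G, m ∈ K₂}`.  Then `F₂` is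
isomorphic, as a group, to the free abelian group on `(G ⧸ range δ) × K₂` via an isomorphism
sending `ρ X ⟦1,m⟧` to the basis element `([X], m)`; moreover this isomorphism intertwines
the `G`-action on `F₂` with the `G`-action on the free abelian group determined on basis
elements by `X · ([Y], m) = ([X*Y], m)`. -/
theorem freeCrossedModule_F2_free_abelian {G K1 K2 : Type*} [Group G]
    (d0 : K1 ⊕ K2 → G) (h2 : ∀ m : K2, d0 (Sum.inr m) = 1)
    (δ : FreeCMGroup d0 →* G) (ρ : G →* MulAut (FreeCMGroup d0))
    (hδ : ∀ (X : G) (m : K1 ⊕ K2), δ (cmGen d0 X m) = X * d0 m * X⁻¹)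
    (hρ : ∀ (X Y : G) (m : K1 ⊕ K2), ρ X (cmGen d0 Y m) = cmGen d0 (X * Y) m)
    (hCM1 : ∀ (X : G) (e : FreeCMGroup d0), δ (ρ X e) = X * δ e * X⁻¹)
    (hCM2 : ∀ e f : FreeCMGroup d0, ρ (δ e) f = e * f * e⁻¹)
    [hN : δ.range.Normal]
    (F2 : Subgroup (FreeCMGroup d0))
    (hF2 : F2 = Subgroup.closure
      {x | ∃ (X : G) (m : K2), x = ρ X (cmGen d0 1 (Sum.inr m))}) :
    (∀ (X : G) (m : K2), ρ X (cmGen d0 1 (Sum.inr m)) ∈ F2) ∧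
    (∀ (X : G), ∀ f ∈ F2, ρ X f ∈ F2) ∧
    ∃ θ : F2 ≃* Multiplicative (FreeAbelianGroup ((G ⧸ δ.range) × K2)),
      (∀ (X : G) (m : K2) (h : ρ X (cmGen d0 1 (Sum.inr m)) ∈ F2),
        θ ⟨ρ X (cmGen d0 1 (Sum.inr m)), h⟩ =
          Multiplicative.ofAdd
            (FreeAbelianGroup.of ((QuotientGroup.mk X : G ⧸ δ.range), m))) ∧
      (∀ (X : G) (f : FreeCMGroup d0) (hf : f ∈ F2) (hxf : ρ X f ∈ F2),
        θ ⟨ρ X f, hxf⟩ = Multiplicative.ofAdd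
          (FreeAbelianGroup.map
            (fun p : (G ⧸ δ.range) × K2 =>
              ((QuotientGroup.mk X : G ⧸ δ.range) * p.1, p.2))
            (Multiplicative.toAdd (θ ⟨f, hf⟩)))) :=
  freeCrossedModule_F2_free_abelian_general d0 h2 δ ρ hδ hρ hCM2 (hN := hN) F2 hF2
end
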